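/- The 4-dimensional complex Leibniz algebra R₃ ([e₁,e₁]=e₃, [e₂,e₁]=e₃, [e₃,e₁]=e₄) is not isomorphic to R₂ ([e₁,e₁]=e₃, [e₁,e₂]=e₄, [e₂,e₁]=e₃, [e₃,e₁]=e₄), since their right annihilators {x : [L,x]=0} have different dimensions. -/

import Mathlib

/-- The bracket of `R₃` as a bilinear map:
`[e₁,e₁]=e₃, [e₂,e₁]=e₃, [e₃,e₁]=e₄`, other products zero. -/
noncomputable def r3 : (Fin 4 → ℂ) →ₗ[ℂ] (Fin 4 → ℂ) →ₗ[ℂ] (Fin 4 → ℂ) :=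
  LinearMap.mk₂ ℂ (fun x y => ![0, 0, x 0 * y 0 + x 1 * y 0, x 2 * y 0])
    (by intro a b c; funext i; fin_cases i <;> simp <;> ring)
    (by intro t a b; funext i; fin_cases i <;> simp <;> ring)
    (by intro a b c; funext i; fin_cases i <;> simp <;> ring)
    (by intro t a b; funext i; fin_cases i <;> simp <;> ring)

/-- The bracket of `R₂` as a bilinear map:
`[e₁,e₁]=e₃, [e₁,e₂]=e₄, [e₂,e₁]=e₃, [e₃,e₁]=e₄`, other products zero. -/
noncomputable def r2 : (Fin 4 → ℂ) →ₗ[ℂ] (Fin 4 → ℂ) →ₗ[ℂ] (Fin 4 → ℂ) :=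
  LinearMap.mk₂ ℂ (fun x y => ![0, 0, x 0 * y 0 + x 1 * y 0, x 0 * y 1 + x 2 * y 0])
    (by intro a b c; funext i; fin_cases i <;> simp <;> ring)
    (by intro t a b; funext i; fin_cases i <;> simp <;> ring)
    (by intro a b c; funext i; fin_cases i <;> simp <;> ring)
    (by intro t a b; funext i; fin_cases i <;> simp <;> ring)

/-! Testing `y` against `e₁` on the left shows that the right annihilator of `R₃` is the
hyperplane of vectors without `e₁`-component, while that of `R₂` also loses the
`e₂`-component; so the two have dimensions `3` and `2`. A linear isomorphism intertwining the
brackets carries right annihilator onto right annihilator and would preserve this dimension. -/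

section RightAnnihilator

variable {R M N : Type*} [CommSemiring R] [AddCommMonoid M] [Module R M]
  [AddCommMonoid N] [Module R N]

theorem LinearEquiv.map_ker_flip_of_map_apply_apply
    {B : M →ₗ[R] M →ₗ[R] M} {B' : N →ₗ[R] N →ₗ[R] N} (f : M ≃ₗ[R] N)
    (hf : ∀ x y, f (B x y) = B' (f x) (f y)) :
    (LinearMap.ker B.flip).map (f : M →ₗ[R] N) = LinearMap.ker B'.flip := by
  ext y
  simp only [Submodule.mem_map, LinearMap.mem_ker, LinearMap.ext_iff, LinearMap.flip_apply,
    LinearMap.zero_apply, LinearEquiv.coe_coe]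
  constructor
  · rintro ⟨z, hz, rfl⟩ x
    rw [← f.apply_symm_apply x, ← hf, hz, map_zero]
  · intro hy
    refine ⟨f.symm y, fun x => f.injective ?_, f.apply_symm_apply y⟩
    rw [hf, f.apply_symm_apply, hy, map_zero]

theorem LinearEquiv.finrank_ker_flip_eq_of_map_apply_apply
    {B : M →ₗ[R] M →ₗ[R] M} {B' : N →ₗ[R] N →ₗ[R] N} (f : M ≃ₗ[R] N)
    (hf : ∀ x y, f (B x y) = B' (f x) (f y)) :
    Module.finrank R (LinearMap.ker B.flip) = Module.finrank R (LinearMap.ker B'.flip) := by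
  rw [← f.map_ker_flip_of_map_apply_apply hf, f.finrank_map_eq]

end RightAnnihilator

theorem LinearMap.finrank_ker_funLeft_castLE (K : Type*) [Field K] {k n : ℕ} (h : k ≤ n) :
    Module.finrank K (LinearMap.ker (LinearMap.funLeft K K (Fin.castLE h))) = n - k := by
  have hrange : LinearMap.range (LinearMap.funLeft K K (Fin.castLE h)) = ⊤ :=
    LinearMap.range_eq_top.2 <|
      LinearMap.funLeft_surjective_of_injective _ _ _ (Fin.castLE_injective h)
  have := (LinearMap.funLeft K K (Fin.castLE h)).finrank_range_add_finrank_ker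
  rw [hrange, finrank_top, Module.finrank_fin_fun, Module.finrank_fin_fun] at this
  omega

theorem mem_ker_r3_flip {y : Fin 4 → ℂ} : y ∈ LinearMap.ker r3.flip ↔ y 0 = 0 := by
  simp only [LinearMap.mem_ker, LinearMap.ext_iff, LinearMap.flip_apply, LinearMap.zero_apply]
  refine ⟨fun h => by simpa [r3] using h ![1, 0, 0, 0], fun h x => ?_⟩
  simp [r3, h]

theorem mem_ker_r2_flip {y : Fin 4 → ℂ} : y ∈ LinearMap.ker r2.flip ↔ y 0 = 0 ∧ y 1 = 0 := by
  simp only [LinearMap.mem_ker, LinearMap.ext_iff, LinearMap.flip_apply, LinearMap.zero_apply]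
  refine ⟨fun h => by simpa [r2] using h ![1, 0, 0, 0], fun ⟨h₀, h₁⟩ x => ?_⟩
  simp [r2, h₀, h₁]

theorem finrank_ker_r3_flip : Module.finrank ℂ (LinearMap.ker r3.flip) = 3 := by
  have hker : LinearMap.ker r3.flip =
      LinearMap.ker (LinearMap.funLeft ℂ ℂ (Fin.castLE (by norm_num : 1 ≤ 4))) := by
    ext y
    rw [mem_ker_r3_flip]
    simp [funext_iff, Fin.forall_fin_one]
  rw [hker, LinearMap.finrank_ker_funLeft_castLE]

theorem finrank_ker_r2_flip : Module.finrank ℂ (LinearMap.ker r2.flip) = 2 := by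
  have hker : LinearMap.ker r2.flip =
      LinearMap.ker (LinearMap.funLeft ℂ ℂ (Fin.castLE (by norm_num : 2 ≤ 4))) := by
    ext y
    rw [mem_ker_r2_flip]
    simp [funext_iff, Fin.forall_fin_two]
  rw [hker, LinearMap.finrank_ker_funLeft_castLE]

/-- `R₃` is not isomorphic to `R₂`: their right annihilators
(`ker` of the flipped bracket) have different dimensions. -/
theorem stmt_15 :
    Module.finrank ℂ (LinearMap.ker r3.flip) ≠
        Module.finrank ℂ (LinearMap.ker r2.flip) ∧
      ¬ ∃ f : (Fin 4 → ℂ) ≃ₗ[ℂ] (Fin 4 → ℂ),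
          ∀ x y, f (r3 x y) = r2 (f x) (f y) := by
  have hne : Module.finrank ℂ (LinearMap.ker r3.flip) ≠
      Module.finrank ℂ (LinearMap.ker r2.flip) := by
    rw [finrank_ker_r3_flip, finrank_ker_r2_flip]
    norm_num
  exact ⟨hne, fun ⟨f, hf⟩ => hne (f.finrank_ker_flip_eq_of_map_apply_apply hf)⟩
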